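/- arXiv:2312.16319 — 9 statements merged into one kernel-verified Lean document; each statement's English description precedes it below -/
import Mathlib

section
/- Let x, y ∈ A_5 with x of cycle type {5} (a 5-cycle) and y of cycle type {3} (a 3-cycle). Then for all g, h ∈ A_5, the subgroup of A_5 generated by g⁻¹xg and h⁻¹yh is all of A_5. -/
/-!
A subgroup `H` of `A₅` containing conjugates of a `5`-cycle and a `3`-cycle has order divisible by
`15`, hence index dividing `4`. If `H` were proper, `A₅` would act faithfully (being simple) on the
at most four cosets of `H`, so `60` would divide `4! = 24`.
-/

open Nat

theorem Equiv.Perm.orderOf_eq_of_cycleType_eq_singleton {α : Type*} [Fintype α] [DecidableEq α]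
    {σ : Equiv.Perm α} {n : ℕ} (h : σ.cycleType = {n}) : orderOf σ = n := by
  rw [← Equiv.Perm.lcm_cycleType, h]
  simp

theorem orderOf_inv_mul_mul {G : Type*} [Group G] (g x : G) : orderOf (g⁻¹ * x * g) = orderOf x :=
  (SemiconjBy.orderOf_eq g⁻¹ (by simp [SemiconjBy, mul_assoc])).symm

namespace Subgroup

variable {G : Type*} [Group G]

theorem index_normalCore_dvd_factorial_index (H : Subgroup G) [H.FiniteIndex] :
    H.normalCore.index ∣ H.index ! := by
  rw [normalCore_eq_ker, index_ker, index_eq_card, ← Nat.card_perm]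
  exact card_subgroup_dvd_card _

theorem card_dvd_factorial_index_of_ne_top [IsSimpleGroup G] {H : Subgroup G} [H.FiniteIndex]
    (hH : H ≠ ⊤) : Nat.card G ∣ H.index ! := by
  have hcore : H.normalCore = ⊥ :=
    (IsSimpleGroup.eq_bot_or_eq_top_of_normal _ H.normalCore_normal).resolve_right
      fun h ↦ hH (top_le_iff.mp (h ▸ H.normalCore_le))
  simpa [hcore] using H.index_normalCore_dvd_factorial_index

end Subgroup

namespace alternatingGroup

theorem nat_card_fin_five : Nat.card (alternatingGroup (Fin 5)) = 60 := by
  rw [nat_card_alternatingGroup, Nat.card_fin]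
  rfl

theorem eq_top_of_orderOf_five_mem_of_orderOf_three_mem {H : Subgroup (alternatingGroup (Fin 5))}
    {a b : alternatingGroup (Fin 5)} (ha : a ∈ H) (hb : b ∈ H) (ha5 : orderOf a = 5)
    (hb3 : orderOf b = 3) : H = ⊤ := by
  by_contra hH
  have h15 : 15 ∣ Nat.card H :=
    Nat.Coprime.mul_dvd_of_dvd_of_dvd (by norm_num) (hb3 ▸ H.orderOf_dvd_natCard hb)
      (ha5 ▸ H.orderOf_dvd_natCard ha)
  have hindex : H.index ∣ 4 := by
    have h := mul_dvd_mul_right h15 H.index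
    rw [H.card_mul_index, nat_card_fin_five] at h
    exact Nat.dvd_of_mul_dvd_mul_left (by norm_num) h
  have h60 : 60 ∣ H.index ! := nat_card_fin_five ▸ Subgroup.card_dvd_factorial_index_of_ne_top hH
  have h24 : H.index ! ≤ 4 ! := Nat.factorial_le (Nat.le_of_dvd (by norm_num) hindex)
  have := Nat.le_of_dvd (factorial_pos _) h60
  simp only [factorial, succ_eq_add_one] at h24
  omega

end alternatingGroup

/-- `A_5` is generated invariably by a `5`-cycle and a `3`-cycle. -/
theorem alternating_five_invariable_generation
    (x y : alternatingGroup (Fin 5))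
    (hx : (x : Equiv.Perm (Fin 5)).cycleType = {5})
    (hy : (y : Equiv.Perm (Fin 5)).cycleType = {3}) :
    ∀ g h : alternatingGroup (Fin 5),
      Subgroup.closure {g⁻¹ * x * g, h⁻¹ * y * h} = ⊤ := by
  intro g h
  have hxo : orderOf x = 5 := by
    rw [← Subgroup.orderOf_coe, Equiv.Perm.orderOf_eq_of_cycleType_eq_singleton hx]
  have hyo : orderOf y = 3 := by
    rw [← Subgroup.orderOf_coe, Equiv.Perm.orderOf_eq_of_cycleType_eq_singleton hy]
  exact alternatingGroup.eq_top_of_orderOf_five_mem_of_orderOf_three_mem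
    (Subgroup.subset_closure (by simp)) (Subgroup.subset_closure (by simp))
    ((orderOf_inv_mul_mul g x).trans hxo) ((orderOf_inv_mul_mul h y).trans hyo)
end

section
/- Let p ≥ 5 be a prime such that p + 1 is a power of 2 (i.e., p is a Mersenne prime). Then the group G = PSL(2, p) is generated invariably by a Sylow p-subgroup and an element of order 2: there exist a Sylow p-subgroup P of G and an element x ∈ G of order 2 such that for all g, h ∈ G, the subgroup of G generated by g⁻¹Pg ∪ {h⁻¹xh} is all of G. -/
/-!
Take for `P` the image of the upper unitriangular group `U`, of order `p`; it is Sylow because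
`p²` does not divide `|GL(2, p)| = (p² - 1)(p² - p)`. Take for `x` the image of
`!![0, 1; -1, 0]`. After conjugating by `g`, it suffices that a subgroup `H` of `PSL(2, p)`
containing `P` and some involution `q` is everything. A lift `A` of `q` satisfies `A² = ±1` and
`A ≠ ±1`; for upper triangular `A` this forces `-1` to be a square mod `p`, impossible as
`p + 1` is a power of two, so `p ≡ 3 [MOD 4]`. Hence `A` has a nonzero lower-left entry, and
over any field `U` together with such a matrix generates `SL(2, F)`: multiplying it on both
sides by elements of `U` gives an antidiagonal matrix, which conjugates `U` onto the lower
unitriangular group.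
-/

open Matrix MatrixGroups

theorem Subgroup.closure_conj_union_conj_eq_top {G : Type*} [Group G] {P : Subgroup G} {x : G}
    (hgen : ∀ H : Subgroup G, P ≤ H → ∀ y ∈ H, IsConj x y → H = ⊤) (g h : G) :
    closure ({z | ∃ a ∈ P, z = g⁻¹ * a * g} ∪ {h⁻¹ * x * h}) = ⊤ := by
  set H := closure ({z | ∃ a ∈ P, z = g⁻¹ * a * g} ∪ {h⁻¹ * x * h})
  have hconj : H.comap (MulAut.conj g⁻¹).toMonoidHom = ⊤ :=
    hgen _ (fun a ha ↦ subset_closure (Or.inl ⟨a, ha, by simp⟩))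
      (g * h⁻¹ * x * h * g⁻¹) (subset_closure (Or.inr (by simp [mul_assoc])))
      (isConj_iff.2 ⟨g * h⁻¹, by group⟩)
  refine eq_top_iff.2 fun z _ ↦ ?_
  have := mem_comap.1 (hconj ▸ mem_top (g * z * g⁻¹))
  simpa [MulEquiv.coe_toMonoidHom, mul_assoc] using this

lemma Nat.mod_four_eq_three_of_add_one_eq_two_pow {n k : ℕ} (h : n + 1 = 2 ^ k) (hn : 2 ≤ n) :
    n % 4 = 3 := by
  have hk : 2 ≤ k := by
    by_contra! hk
    interval_cases k <;> omega
  rw [← Nat.sub_add_cancel hk, pow_add] at h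
  omega

lemma Nat.Prime.not_mul_self_dvd_sq_sub_one_mul {p : ℕ} (hp : p.Prime) :
    ¬p * p ∣ (p ^ 2 - 1) * (p ^ 2 - p) := by
  have := Fact.mk hp
  rintro ⟨m, hm⟩
  have hsub : p ^ 2 - p = p * (p - 1) := by rw [Nat.mul_sub_one, sq]
  have hcancel : (p ^ 2 - 1) * (p - 1) = p * m :=
    Nat.eq_of_mul_eq_mul_left hp.pos (by rw [hsub] at hm; linarith)
  -- modulo `p` the left side is `(-1) * (-1) = 1`
  have := congr_arg (Nat.cast : ℕ → ZMod p) hcancel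
  push_cast [Nat.one_le_pow _ _ hp.pos, hp.one_le] at this
  simp at this

namespace Matrix.SpecialLinearGroup

section CommRing

variable {R : Type*} [CommRing R]

lemma coe_transvection_zero_one (c : R) :
    (transvection (zero_ne_one : (0 : Fin 2) ≠ 1) c : Matrix (Fin 2) (Fin 2) R) =
      !![1, c; 0, 1] := by
  ext i j; fin_cases i <;> fin_cases j <;> simp [transvection_coe]

lemma coe_transvection_one_zero (c : R) :
    (transvection (one_ne_zero : (1 : Fin 2) ≠ 0) c : Matrix (Fin 2) (Fin 2) R) =
      !![1, 0; c, 1] := by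
  ext i j; fin_cases i <;> fin_cases j <;> simp [transvection_coe]

def weyl : SL(2, R) := ⟨!![0, 1; -1, 0], by simp [det_fin_two_of]⟩

lemma weyl_sq_mem_center : weyl ^ 2 ∈ Subgroup.center SL(2, R) :=
  mem_center_iff.2 ⟨-1, by norm_num, by
    rw [coe_pow]; ext i j; fin_cases i <;> fin_cases j <;> simp [weyl, sq]⟩

lemma weyl_notMem_center [Nontrivial R] : weyl ∉ Subgroup.center SL(2, R) := fun h ↦ by
  obtain ⟨r, -, hr⟩ := mem_center_iff.1 h
  have h00 := congr_fun₂ hr 0 0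
  have h01 := congr_fun₂ hr 0 1
  simp_all [weyl]

lemma orderOf_mk_weyl [Nontrivial R] :
    orderOf (QuotientGroup.mk' (Subgroup.center SL(2, R)) weyl) = 2 :=
  orderOf_eq_prime ((QuotientGroup.eq_one_iff (weyl ^ 2)).2 weyl_sq_mem_center)
    (mt (QuotientGroup.eq_one_iff weyl).1 weyl_notMem_center)

end CommRing

variable {F : Type*} [Field F]

variable (F) in
def upperUnipotentHom : Multiplicative F →* SL(2, F) where
  toFun c := transvection zero_ne_one c.toAdd
  map_one' := transvection_coeff_zero _
  map_mul' _ _ := transvection_add _ _ _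

variable (F) in
def upperUnipotent : Subgroup SL(2, F) := (upperUnipotentHom F).range

lemma transvection_mem_upperUnipotent (c : F) :
    transvection zero_ne_one c ∈ upperUnipotent F :=
  ⟨Multiplicative.ofAdd c, rfl⟩

lemma eq_top_of_upperUnipotent_le {K : Subgroup SL(2, F)} (hU : upperUnipotent F ≤ K)
    {t : SL(2, F)} (ht : t ∈ K) (ht₁₀ : t 1 0 ≠ 0) : K = ⊤ := by
  have hu (x : F) : transvection zero_ne_one x ∈ K := hU (transvection_mem_upperUnipotent x)
  obtain ⟨a, b, c, d, ht_coe⟩ : ∃ a b c d : F, (t : Matrix (Fin 2) (Fin 2) F) = !![a, b; c, d] :=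
    ⟨_, _, _, _, eta_fin_two _⟩
  have hc : c ≠ 0 := by simpa [ht_coe] using ht₁₀
  have hdet : a * d - b * c = 1 := by simpa [ht_coe, det_fin_two_of] using t.2
  obtain rfl : b = (a * d - 1) / c := by field_simp; linear_combination -hdet
  set w := transvection zero_ne_one (-a / c) * t * transvection zero_ne_one (-d / c)
  have hw : w ∈ K := mul_mem (mul_mem (hu _) ht) (hu _)
  have hw_coe : (w : Matrix (Fin 2) (Fin 2) F) = !![0, -c⁻¹; c, 0] := by
    simp only [w, coe_mul, coe_transvection_zero_one, ht_coe, mul_fin_two]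
    ext i j
    fin_cases i <;> fin_cases j <;> simp <;> field_simp <;> ring
  have hl (z : F) : transvection one_ne_zero z ∈ K := by
    have : transvection one_ne_zero z = w * transvection zero_ne_one (-z / c ^ 2) * w⁻¹ := by
      refine eq_mul_inv_of_mul_eq (Subtype.ext ?_)
      simp only [coe_mul, hw_coe, coe_transvection_zero_one, coe_transvection_one_zero,
        mul_fin_two]
      ext i j
      fin_cases i <;> fin_cases j <;> simp
      field_simp
    rw [this]
    exact mul_mem (mul_mem hw (hu _)) (inv_mem hw)
  refine eq_top_iff.2 fun A _ ↦ SL2.transvection_induction (· ∈ K) (fun i j hij x ↦ ?_)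
    (fun _ _ ↦ mul_mem) A
  fin_cases i <;> fin_cases j
  all_goals first | exact absurd rfl hij | exact hu x | exact hl x

lemma mem_center_of_sq_mem_center (hF : ¬IsSquare (-1 : F)) {A : SL(2, F)} (hA : A 1 0 = 0)
    (hA2 : A ^ 2 ∈ Subgroup.center SL(2, F)) : A ∈ Subgroup.center SL(2, F) := by
  obtain ⟨a, b, d, hA_coe⟩ : ∃ a b d : F, (A : Matrix (Fin 2) (Fin 2) F) = !![a, b; 0, d] :=
    ⟨_, _, _, by rw [← hA]; exact eta_fin_two _⟩
  have hdet : a * d = 1 := by simpa [hA_coe, det_fin_two_of] using A.2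
  obtain ⟨r, hr, hr_eq⟩ := mem_center_iff.1 hA2
  have hA2_coe : ((A ^ 2 : SL(2, F)) : Matrix (Fin 2) (Fin 2) F) =
      !![a * a, b * (a + d); 0, d * d] := by
    rw [coe_pow, hA_coe, sq, mul_fin_two]; simp [mul_add, mul_comm]
  rw [hA2_coe, ← Matrix.ext_iff] at hr_eq
  have h00 : r = a * a := by simpa using hr_eq 0 0
  have h01 : b = 0 ∨ a + d = 0 := by simpa using hr_eq 0 1
  have ha : a * a = 1 := by
    rw [← h00]
    refine (sq_eq_one_iff.1 (by simpa using hr)).resolve_right fun hr' ↦ hF ⟨a, ?_⟩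
    rw [← h00, hr']
  have hd : d = a := by linear_combination (-d) * ha + a * hdet
  have h2 : (2 : F) ≠ 0 := fun h2 ↦ hF ⟨1, by linear_combination -h2⟩
  obtain rfl : b = 0 := h01.resolve_right fun had ↦ by
    have : 2 * a = 0 := by linear_combination had - hd
    simp_all
  refine mem_center_iff.2 ⟨a, by simpa [sq] using ha, ?_⟩
  rw [hA_coe, hd]
  ext i j; fin_cases i <;> fin_cases j <;> simp

end Matrix.SpecialLinearGroup

open Matrix.SpecialLinearGroup

namespace Matrix.ProjectiveSpecialLinearGroup

variable {F : Type*} [Field F]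

variable (F) in
def upperUnipotent : Subgroup PSL(2, F) :=
  (SpecialLinearGroup.upperUnipotent F).map (QuotientGroup.mk' _)

lemma eq_top_of_upperUnipotent_le_of_orderOf_eq_two (hF : ¬IsSquare (-1 : F))
    {H : Subgroup PSL(2, F)} (hU : upperUnipotent F ≤ H) {q : PSL(2, F)} (hq : q ∈ H)
    (hq2 : orderOf q = 2) : H = ⊤ := by
  obtain ⟨A, rfl⟩ := QuotientGroup.mk'_surjective _ q
  have hA : A 1 0 ≠ 0 := fun hA ↦ by
    have hA2 : A ^ 2 ∈ Subgroup.center SL(2, F) := by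
      have := pow_orderOf_eq_one (QuotientGroup.mk' (Subgroup.center SL(2, F)) A)
      rwa [hq2, ← map_pow, QuotientGroup.mk'_apply, QuotientGroup.eq_one_iff] at this
    have := (QuotientGroup.eq_one_iff A).2 (mem_center_of_sq_mem_center hF hA hA2)
    simp_all
  have : H.comap (QuotientGroup.mk' _) = ⊤ :=
    eq_top_of_upperUnipotent_le (Subgroup.map_le_iff_le_comap.1 hU) hq hA
  rw [← Subgroup.map_comap_eq_self_of_surjective (QuotientGroup.mk'_surjective _) H, this,
    Subgroup.map_top_of_surjective _ (QuotientGroup.mk'_surjective _)]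

lemma card_upperUnipotent : Nat.card (upperUnipotent F) = Nat.card F := by
  have hinj : Function.Injective
      ((QuotientGroup.mk' (Subgroup.center SL(2, F))).comp (upperUnipotentHom F)) := by
    refine (injective_iff_map_eq_one _).2 fun c hc ↦ ?_
    exact toAdd_eq_zero.1 <| (transvection_mem_center_iff zero_ne_one _).1 <|
      (QuotientGroup.eq_one_iff (SpecialLinearGroup.transvection zero_ne_one c.toAdd)).1 hc
  rw [upperUnipotent, SpecialLinearGroup.upperUnipotent, MonoidHom.map_range,
    Nat.card_congr (MonoidHom.ofInjective hinj).toEquiv.symm]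
  rfl

variable {p : ℕ} [Fact p.Prime]

lemma isPGroup_upperUnipotent : IsPGroup p (upperUnipotent (ZMod p)) :=
  IsPGroup.of_card (by rw [card_upperUnipotent, Nat.card_zmod, pow_one])

lemma coprime_index_upperUnipotent : (upperUnipotent (ZMod p)).index.Coprime p := by
  refine Nat.Coprime.symm ((Nat.Prime.coprime_iff_not_dvd Fact.out).2 fun hdvd ↦ ?_)
  apply (Fact.out : p.Prime).not_mul_self_dvd_sq_sub_one_mul
  calc p * p ∣ Nat.card (upperUnipotent (ZMod p)) * (upperUnipotent (ZMod p)).index := by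
        rw [card_upperUnipotent, Nat.card_zmod]; exact mul_dvd_mul_left p hdvd
    _ = Nat.card PSL(2, ZMod p) := Subgroup.card_mul_index _
    _ ∣ Nat.card SL(2, ZMod p) := Subgroup.card_quotient_dvd_card _
    _ ∣ Nat.card (GL (Fin 2) (ZMod p)) := Subgroup.card_dvd_of_injective _ toGL_injective
    _ = (p ^ 2 - 1) * (p ^ 2 - p) := by rw [card_GL_field]; simp [Fin.prod_univ_two]

end Matrix.ProjectiveSpecialLinearGroup

open Matrix.ProjectiveSpecialLinearGroup

theorem PSL2_mersenne_invariable_generation_general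
    (p : ℕ) (hp : p.Prime) (hmersenne : ∃ k : ℕ, p + 1 = 2 ^ k) :
    ∃ P : Subgroup (Matrix.SpecialLinearGroup (Fin 2) (ZMod p) ⧸
        Subgroup.center (Matrix.SpecialLinearGroup (Fin 2) (ZMod p))),
      IsPGroup p P ∧ Nat.Coprime P.index p ∧
      ∃ x : Matrix.SpecialLinearGroup (Fin 2) (ZMod p) ⧸
          Subgroup.center (Matrix.SpecialLinearGroup (Fin 2) (ZMod p)),
        orderOf x = 2 ∧
        ∀ g h : Matrix.SpecialLinearGroup (Fin 2) (ZMod p) ⧸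
            Subgroup.center (Matrix.SpecialLinearGroup (Fin 2) (ZMod p)),
          Subgroup.closure
            ({z | ∃ a ∈ P, z = g⁻¹ * a * g} ∪ {h⁻¹ * x * h}) = ⊤ := by
  have := Fact.mk hp
  obtain ⟨k, hk⟩ := hmersenne
  have hF : ¬IsSquare (-1 : ZMod p) := by
    rw [ZMod.exists_sq_eq_neg_one_iff, not_not]
    exact Nat.mod_four_eq_three_of_add_one_eq_two_pow hk hp.two_le
  refine ⟨upperUnipotent (ZMod p), isPGroup_upperUnipotent, coprime_index_upperUnipotent,
    _, orderOf_mk_weyl, Subgroup.closure_conj_union_conj_eq_top fun H hU y hy hxy ↦ ?_⟩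
  obtain ⟨c, rfl⟩ := isConj_iff.1 hxy
  exact eq_top_of_upperUnipotent_le_of_orderOf_eq_two hF hU hy
    ((SemiconjBy.orderOf_eq c (SemiconjBy.conj_mk c _)).symm.trans orderOf_mk_weyl)

/-- For a Mersenne prime `p ≥ 5`, the group `PSL(2, p)` is generated invariably by a
Sylow `p`-subgroup and an element of order two. -/
theorem PSL2_mersenne_invariable_generation
    (p : ℕ) (hp : p.Prime) (h5 : 5 ≤ p) (hmersenne : ∃ k : ℕ, p + 1 = 2 ^ k) :
    ∃ P : Subgroup (Matrix.SpecialLinearGroup (Fin 2) (ZMod p) ⧸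
        Subgroup.center (Matrix.SpecialLinearGroup (Fin 2) (ZMod p))),
      IsPGroup p P ∧ Nat.Coprime P.index p ∧
      ∃ x : Matrix.SpecialLinearGroup (Fin 2) (ZMod p) ⧸
          Subgroup.center (Matrix.SpecialLinearGroup (Fin 2) (ZMod p)),
        orderOf x = 2 ∧
        ∀ g h : Matrix.SpecialLinearGroup (Fin 2) (ZMod p) ⧸
            Subgroup.center (Matrix.SpecialLinearGroup (Fin 2) (ZMod p)),
          Subgroup.closure
            ({z | ∃ a ∈ P, z = g⁻¹ * a * g} ∪ {h⁻¹ * x * h}) = ⊤ :=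
  PSL2_mersenne_invariable_generation_general p hp hmersenne
end

section
/- (Zsigmondy) Let q ≥ 2 and e ≥ 2 be integers, and suppose that it is not the case that q = 2 and e = 6, and not the case that e = 2 and q + 1 is a power of 2. Then there exists a prime r such that r divides q^e − 1 but r does not divide q^f − 1 for any integer f with 1 ≤ f < e. -/
/-!
Write `Φ = Φₑ(q)` for the value of the `e`-th cyclotomic polynomial. For a prime `r ∣ Φ` the
order of `q` modulo `r` is `ordCompl[r] e`, the part of `e` prime to `r`, so a prime factor of
`Φ` not dividing `e` is a Zsigmondy prime. Suppose there is none. As `ordCompl[r] e ∣ r - 1`,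
every prime factor of `Φ` is then the largest prime factor `P` of `e`, and `Φ = Pᵏ`. For `e = 2`
this says `q + 1 = 2ᵏ`. For `e > 2`, lifting the exponent (or `Φ_{2^a}(q) ≡ 2 mod 4`) gives
`P² ∤ Φ`, so `Φ = P`. This contradicts `Φ > (q - 1)^φ(e) ≥ 2^(P-1)` when `q ≥ 3`. For `q = 2`,
either `ℓ² ∣ e` and `Φₑ(2) = Φ_{e/ℓ}(2^ℓ)` reduces to that bound, or `e = P m` is squarefree and
`Φ_m(2^P) = Φₑ(2) Φ_m(2)` gives `Φₑ(2) > ((2^P - 1)/3)^φ(m) ≥ P` once `P ≥ 5`; the squarefree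
`e ∣ 6` are checked by hand, and `e = 6` is the exception.
-/

open Polynomial Finset

def IsZsigmondyPrime (q e r : ℕ) : Prop :=
  r.Prime ∧ r ∣ q ^ e - 1 ∧ ∀ f : ℕ, 1 ≤ f → f < e → ¬ r ∣ q ^ f - 1

theorem intCast_dvd_pow_sub_one_iff_orderOf_dvd {r f : ℕ} (q : ℤ) :
    (r : ℤ) ∣ q ^ f - 1 ↔ orderOf (q : ZMod r) ∣ f := by
  rw [orderOf_dvd_iff_pow_eq_one, ← ZMod.intCast_zmod_eq_zero_iff_dvd]
  push_cast
  exact sub_eq_zero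

theorem dvd_pow_sub_one_iff_orderOf_dvd {r q f : ℕ} (hq : q ≠ 0) :
    r ∣ q ^ f - 1 ↔ orderOf (q : ZMod r) ∣ f := by
  rw [← Int.cast_natCast, ← intCast_dvd_pow_sub_one_iff_orderOf_dvd, ← Int.natCast_dvd_natCast,
    Nat.cast_sub (Nat.one_le_pow _ _ (Nat.pos_of_ne_zero hq))]
  push_cast
  rfl

theorem isZsigmondyPrime_of_orderOf_eq {q e r : ℕ} (hr : r.Prime) (hq : q ≠ 0)
    (h : orderOf (q : ZMod r) = e) : IsZsigmondyPrime q e r :=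
  ⟨hr, (dvd_pow_sub_one_iff_orderOf_dvd hq).2 h.dvd, fun _ hf hfe hrf =>
    hfe.not_ge (Nat.le_of_dvd hf (h ▸ (dvd_pow_sub_one_iff_orderOf_dvd hq).1 hrf))⟩

section DvdCyclotomicEval

variable {r e : ℕ} {q : ℤ}

theorem ne_zero_of_dvd_cyclotomic_eval (hr : r.Prime) (h : (r : ℤ) ∣ (cyclotomic e ℤ).eval q) :
    e ≠ 0 := by
  rintro rfl
  simp only [cyclotomic_zero, eval_one, Int.natCast_dvd, Int.natAbs_one, Nat.dvd_one] at h
  exact hr.ne_one h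

theorem orderOf_eq_ordCompl_of_dvd_cyclotomic_eval (hr : r.Prime)
    (h : (r : ℤ) ∣ (cyclotomic e ℤ).eval q) : orderOf (q : ZMod r) = ordCompl[r] e := by
  have := Fact.mk hr
  have he := ne_zero_of_dvd_cyclotomic_eval hr h
  have : NeZero ((ordCompl[r] e : ℕ) : ZMod r) :=
    ⟨by rw [Ne, ZMod.natCast_eq_zero_iff]; exact Nat.not_dvd_ordCompl hr he⟩
  have hroot :
      (cyclotomic (r ^ e.factorization r * ordCompl[r] e) (ZMod r)).IsRoot (q : ZMod r) := by
    rw [Nat.ordProj_mul_ordCompl_eq_self, IsRoot.def, ← eq_intCast (Int.castRingHom _),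
      cyclotomic.eval_apply, eq_intCast, ZMod.intCast_zmod_eq_zero_iff_dvd]
    exact h
  exact (isRoot_cyclotomic_prime_pow_mul_iff_of_charP.mp hroot).eq_orderOf.symm

theorem not_dvd_of_dvd_cyclotomic_eval (hr : r.Prime) (h : (r : ℤ) ∣ (cyclotomic e ℤ).eval q) :
    ¬ (r : ℤ) ∣ q := by
  have := Fact.mk hr
  rw [← ZMod.intCast_zmod_eq_zero_iff_dvd]
  intro hq
  have hord := orderOf_eq_ordCompl_of_dvd_cyclotomic_eval hr h
  rw [hq, orderOf_eq_zero_iff'.mpr fun n hn => by simp [zero_pow hn.ne']] at hord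
  exact (Nat.ordCompl_pos r (ne_zero_of_dvd_cyclotomic_eval hr h)).ne' hord.symm

theorem ordCompl_dvd_sub_one_of_dvd_cyclotomic_eval (hr : r.Prime)
    (h : (r : ℤ) ∣ (cyclotomic e ℤ).eval q) : ordCompl[r] e ∣ r - 1 := by
  have := Fact.mk hr
  rw [← orderOf_eq_ordCompl_of_dvd_cyclotomic_eval hr h]
  refine ZMod.orderOf_dvd_card_sub_one ?_
  rw [Ne, ZMod.intCast_zmod_eq_zero_iff_dvd]
  exact not_dvd_of_dvd_cyclotomic_eval hr h

theorem lt_of_dvd_of_dvd_cyclotomic_eval {ℓ : ℕ} (hr : r.Prime) (hℓ : ℓ.Prime) (hℓe : ℓ ∣ e)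
    (hne : ℓ ≠ r) (h : (r : ℤ) ∣ (cyclotomic e ℤ).eval q) : ℓ < r := by
  have hℓm : ℓ ∣ ordCompl[r] e := Nat.dvd_ordCompl_of_dvd_not_dvd hℓe fun hrℓ =>
    hne ((Nat.prime_dvd_prime_iff_eq hr hℓ).1 hrℓ).symm
  have := Nat.le_of_dvd (by have := hr.two_le; omega)
    (hℓm.trans (ordCompl_dvd_sub_one_of_dvd_cyclotomic_eval hr h))
  omega

end DvdCyclotomicEval

theorem isZsigmondyPrime_of_dvd_cyclotomic_eval {q e r : ℕ} (hr : r.Prime) (hre : ¬ r ∣ e)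
    (h : (r : ℤ) ∣ (cyclotomic e ℤ).eval (q : ℤ)) : IsZsigmondyPrime q e r := by
  have hq : q ≠ 0 := by
    rintro rfl
    exact not_dvd_of_dvd_cyclotomic_eval hr h (dvd_zero _)
  refine isZsigmondyPrime_of_orderOf_eq hr hq ?_
  rw [← Int.cast_natCast, orderOf_eq_ordCompl_of_dvd_cyclotomic_eval hr h,
    (Nat.ordCompl_eq_self_iff_zero_or_not_dvd e hr).2 (Or.inr hre)]

theorem cyclotomic_mul_dvd_geom_sum (R : Type*) [CommRing R] [IsDomain R] {d p : ℕ} (hd : d ≠ 0)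
    (hp : 1 < p) : cyclotomic (d * p) R ∣ ∑ i ∈ range p, (X ^ d) ^ i := by
  have hmem : d ∈ (d * p).properDivisors :=
    Nat.mem_properDivisors.2 ⟨dvd_mul_right d p, lt_mul_right (Nat.pos_of_ne_zero hd) hp⟩
  have hne : (X ^ d - 1 : R[X]) ≠ 0 := by
    simpa using X_pow_sub_C_ne_zero (Nat.pos_of_ne_zero hd) (1 : R)
  have := X_pow_sub_one_mul_cyclotomic_dvd_X_pow_sub_one_of_dvd R hmem
  rwa [pow_mul, ← geom_sum_mul (X ^ d) p, mul_comm _ (X ^ d - 1), mul_dvd_mul_iff_left hne] at this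

theorem not_sq_dvd_cyclotomic_eval_of_odd {p e : ℕ} {q : ℤ} (hp : p.Prime) (hodd : Odd p)
    (hpe : p ∣ e) (h : (p : ℤ) ∣ (cyclotomic e ℤ).eval q) :
    ¬ (p : ℤ) ^ 2 ∣ (cyclotomic e ℤ).eval q := by
  have he := ne_zero_of_dvd_cyclotomic_eval hp h
  obtain ⟨d, rfl⟩ := hpe
  have hord : orderOf (q : ZMod p) ∣ d := by
    rw [orderOf_eq_ordCompl_of_dvd_cyclotomic_eval hp h,
      ← Nat.ordCompl_div_of_dvd hp (dvd_mul_right p d), Nat.mul_div_cancel_left d hp.pos]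
    exact Nat.ordCompl_dvd d p
  have hqd : ¬ (p : ℤ) ∣ q ^ d := fun hdvd =>
    not_dvd_of_dvd_cyclotomic_eval hp h (Int.Prime.dvd_pow' hp hdvd)
  -- lifting the exponent: `p ∣ x - 1` forces `p ∥ 1 + x + ⋯ + x ^ (p - 1)`
  have hmult := emultiplicity_geom_sum₂_eq_one (y := 1) (Nat.prime_iff_prime_int.1 hp) hodd
    ((intCast_dvd_pow_sub_one_iff_orderOf_dvd q).2 hord) hqd
  have hgeom :=
    eval_dvd (x := q) (cyclotomic_mul_dvd_geom_sum ℤ (right_ne_zero_of_mul he) hp.one_lt)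
  rw [mul_comm d p] at hgeom
  simp only [one_pow, mul_one] at hmult
  simp only [eval_finsetSum, eval_pow, eval_X] at hgeom
  intro hsq
  have := pow_dvd_iff_le_emultiplicity.1 (hsq.trans hgeom)
  rw [hmult] at this
  exact absurd this (by norm_num)

theorem not_four_dvd_cyclotomic_two_pow_eval {q : ℤ} (hq : Odd q) {a : ℕ} (ha : 2 ≤ a) :
    ¬ 4 ∣ (cyclotomic (2 ^ a) ℤ).eval q := by
  obtain ⟨k, rfl⟩ : ∃ k, a = k + 2 := ⟨a - 2, by omega⟩
  rw [cyclotomic_prime_pow_eq_geom_sum Nat.prime_two]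
  have hsq := Int.sq_mod_four_eq_one_of_odd (hq.pow (n := 2 ^ k))
  simp only [sum_range_succ, sum_range_zero, eval_add, eval_pow, eval_X, eval_one, pow_zero,
    pow_one, zero_add]
  rw [pow_succ, pow_mul]
  omega

theorem not_sq_dvd_cyclotomic_eval {p e : ℕ} {q : ℤ} (hp : p.Prime) (hpe : p ∣ e) (he : 2 < e)
    (h : (p : ℤ) ∣ (cyclotomic e ℤ).eval q) : ¬ (p : ℤ) ^ 2 ∣ (cyclotomic e ℤ).eval q := by
  rcases hp.eq_two_or_odd' with rfl | hodd
  · have hcompl : ordCompl[2] e = 1 :=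
      Nat.dvd_one.1 (ordCompl_dvd_sub_one_of_dvd_cyclotomic_eval hp h)
    have he2 : 2 ^ e.factorization 2 = e := by
      simpa [hcompl] using Nat.ordProj_mul_ordCompl_eq_self e 2
    have ha : 2 ≤ e.factorization 2 :=
      (Nat.pow_lt_pow_iff_right (by norm_num)).1 (by rw [he2]; omega : 2 ^ 1 < 2 ^ _)
    have hq : Odd q := Int.not_even_iff_odd.1 fun heven =>
      not_dvd_of_dvd_cyclotomic_eval hp h (even_iff_two_dvd.1 heven)
    rw [← he2]
    exact_mod_cast not_four_dvd_cyclotomic_two_pow_eval hq ha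
  · exact not_sq_dvd_cyclotomic_eval_of_odd hp hodd hpe h

theorem three_mul_add_one_lt_two_pow {n : ℕ} (hn : 5 ≤ n) : 3 * n + 1 < 2 ^ n := by
  induction n, hn using Nat.le_induction with
  | base => norm_num
  | succ n hn ih => rw [pow_succ]; omega

theorem prime_lt_natAbs_cyclotomic_eval_of_three_le {n p q : ℕ} (hq : 3 ≤ q) (hn : 1 < n)
    (hp : p.Prime) (hpn : p ∣ n) : p < ((cyclotomic n ℤ).eval (q : ℤ)).natAbs := by
  have htot : p - 1 ≤ n.totient := by
    rw [← Nat.totient_prime hp]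
    exact Nat.le_of_dvd (Nat.totient_pos.2 (by omega)) (Nat.totient_dvd_of_dvd hpn)
  calc p ≤ 2 ^ (p - 1) := by have := Nat.lt_two_pow_self (n := p - 1); omega
    _ ≤ 2 ^ n.totient := Nat.pow_le_pow_right two_pos htot
    _ ≤ (q - 1) ^ n.totient := Nat.pow_le_pow_left (by omega) _
    _ < _ := sub_one_pow_totient_lt_natAbs_cyclotomic_eval hn (by omega)

theorem prime_lt_natAbs_cyclotomic_eval_of_not_squarefree {e p q : ℕ} (hq : 2 ≤ q) (he : e ≠ 0)
    (hsq : ¬ Squarefree e) (hp : p.Prime) (hpe : p ∣ e) :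
    p < ((cyclotomic e ℤ).eval (q : ℤ)).natAbs := by
  obtain ⟨ℓ, hℓ, n, rfl⟩ : ∃ ℓ, ℓ.Prime ∧ ℓ * ℓ ∣ e := by
    simpa [Nat.squarefree_iff_prime_squarefree] using hsq
  have hpn : p ∣ ℓ * n := by
    rw [mul_assoc] at hpe
    exact (hp.dvd_mul.1 hpe).elim (fun h => h.mul_right n) id
  have hcyc : cyclotomic (ℓ * ℓ * n) ℤ = expand ℤ ℓ (cyclotomic (ℓ * n) ℤ) := by
    rw [cyclotomic_expand_eq_cyclotomic hℓ (dvd_mul_right ℓ n)]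
    ring_nf
  have hqℓ : 3 ≤ q ^ ℓ :=
    calc 3 ≤ q ^ 2 := by nlinarith
      _ ≤ q ^ ℓ := Nat.pow_le_pow_right (by omega) hℓ.two_le
  rw [hcyc, expand_eval]
  exact_mod_cast prime_lt_natAbs_cyclotomic_eval_of_three_le hqℓ
    (one_lt_mul_of_lt_of_le hℓ.one_lt (Nat.pos_of_ne_zero (right_ne_zero_of_mul he))) hp hpn

theorem prime_lt_cyclotomic_eval_two {m p : ℕ} (hp : p.Prime) (hp5 : 5 ≤ p) (hpm : ¬ p ∣ m) :
    (p : ℝ) < (cyclotomic (p * m) ℝ).eval 2 := by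
  set φ := m.totient
  have hφ : φ ≠ 0 := by
    simpa [φ, Nat.totient_eq_zero] using fun hm : m = 0 => hpm (hm ▸ dvd_zero p)
  have hexp : (cyclotomic m ℝ).eval (2 ^ p) =
      (cyclotomic (p * m) ℝ).eval 2 * (cyclotomic m ℝ).eval 2 := by
    rw [← eval_mul, mul_comm p, ← cyclotomic_expand_eq_cyclotomic_mul hp hpm, expand_eval]
  have h3p : (3 * p : ℝ) < 2 ^ p - 1 := by
    have : ((3 * p + 1 : ℕ) : ℝ) < ((2 ^ p : ℕ) : ℝ) := by
      exact_mod_cast three_mul_add_one_lt_two_pow hp5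
    push_cast at this
    linarith
  have hlow := sub_one_pow_totient_le_cyclotomic_eval (q := (2 : ℝ) ^ p)
    (one_lt_pow₀ one_lt_two hp.ne_zero) m
  have hup : (cyclotomic m ℝ).eval 2 ≤ 3 ^ φ := by
    have := cyclotomic_eval_le_add_one_pow_totient (q := (2 : ℝ)) one_lt_two m
    norm_num at this
    exact this
  have hF : 0 ≤ (cyclotomic (p * m) ℝ).eval 2 := cyclotomic_nonneg _ one_le_two
  have key : 3 ^ φ * (p : ℝ) ^ φ < 3 ^ φ * (cyclotomic (p * m) ℝ).eval 2 :=
    calc 3 ^ φ * (p : ℝ) ^ φ = (3 * p) ^ φ := (mul_pow _ _ _).symm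
      _ < (2 ^ p - 1) ^ φ := pow_lt_pow_left₀ h3p (by positivity) hφ
      _ ≤ (cyclotomic (p * m) ℝ).eval 2 * (cyclotomic m ℝ).eval 2 := hexp ▸ hlow
      _ ≤ (cyclotomic (p * m) ℝ).eval 2 * 3 ^ φ := mul_le_mul_of_nonneg_left hup hF
      _ = _ := mul_comm _ _
  calc (p : ℝ) ≤ (p : ℝ) ^ φ := le_self_pow₀ (by exact_mod_cast hp.one_le) hφ
    _ < _ := lt_of_mul_lt_mul_left key (by positivity)

theorem prime_lt_natAbs_cyclotomic_eval_two_of_squarefree {e p : ℕ} (hsq : Squarefree e)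
    (hp : p.Prime) (hpe : p ∣ e) (hmax : ∀ ℓ, ℓ.Prime → ℓ ∣ e → ℓ ≤ p) (h6 : e ≠ 6) :
    p < ((cyclotomic e ℤ).eval 2).natAbs := by
  rcases (by omega : p ≤ 3 ∨ 4 ≤ p) with hp3 | hp4
  · have he6 : e ∣ 6 := by
      rw [← Nat.prod_primeFactors_of_squarefree hsq]
      refine (prod_dvd_prod_of_subset _ ({2, 3} : Finset ℕ) id fun ℓ hℓ => ?_).trans dvd_rfl
      have := hmax ℓ (Nat.prime_of_mem_primeFactors hℓ) (Nat.dvd_of_mem_primeFactors hℓ)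
      have := (Nat.prime_of_mem_primeFactors hℓ).two_le
      simp only [mem_insert, mem_singleton]
      omega
    have hpe' := Nat.le_of_dvd (Nat.pos_of_dvd_of_pos he6 (by norm_num)) hpe
    have := Nat.le_of_dvd (by norm_num) he6
    have := hp.two_le
    obtain rfl | rfl : e = 2 ∨ e = 3 := by interval_cases e <;> omega
    · simp only [cyclotomic_two, eval_add, eval_X, eval_one]
      omega
    · simp only [cyclotomic_three, eval_add, eval_pow, eval_X, eval_one]
      omega
  · have hp5 : 5 ≤ p := by
      rcases hp4.eq_or_lt with rfl | h
      · norm_num at hp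
      · omega
    obtain ⟨m, rfl⟩ := hpe
    have hpm : ¬ p ∣ m := fun hpm => hp.not_isUnit (hsq p (mul_dvd_mul_left p hpm))
    have hcast : (((cyclotomic (p * m) ℤ).eval 2 : ℤ) : ℝ) = (cyclotomic (p * m) ℝ).eval 2 := by
      simpa using (cyclotomic.eval_apply (2 : ℤ) (p * m) (Int.castRingHom ℝ)).symm
    rw [← Nat.cast_lt (α := ℝ), Nat.cast_natAbs, Int.cast_abs, hcast]
    exact (prime_lt_cyclotomic_eval_two hp hp5 hpm).trans_le (le_abs_self _)

theorem prime_lt_natAbs_cyclotomic_eval {q e p : ℕ} (hq : 2 ≤ q) (he : e ≠ 0) (hp : p.Prime)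
    (hpe : p ∣ e) (hmax : ∀ ℓ, ℓ.Prime → ℓ ∣ e → ℓ ≤ p) (hexc : ¬(q = 2 ∧ e = 6)) :
    p < ((cyclotomic e ℤ).eval (q : ℤ)).natAbs := by
  rcases (by omega : 3 ≤ q ∨ q = 2) with hq3 | rfl
  · exact prime_lt_natAbs_cyclotomic_eval_of_three_le hq3
      (hp.one_lt.trans_le (Nat.le_of_dvd (Nat.pos_of_ne_zero he) hpe)) hp hpe
  by_cases hsq : Squarefree e
  · exact prime_lt_natAbs_cyclotomic_eval_two_of_squarefree hsq hp hpe hmax fun h => hexc ⟨rfl, h⟩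
  · exact prime_lt_natAbs_cyclotomic_eval_of_not_squarefree hq he hsq hp hpe

theorem exists_prime_pow_eq_natAbs_cyclotomic_eval {q e : ℕ} (hq : 2 ≤ q) (he : 2 ≤ e)
    (hdiv : ∀ r, r.Prime → r ∣ ((cyclotomic e ℤ).eval (q : ℤ)).natAbs → r ∣ e) :
    ∃ P k, P.Prime ∧ P ∣ e ∧ (∀ ℓ, ℓ.Prime → ℓ ∣ e → ℓ ≤ P) ∧
      (P : ℤ) ∣ (cyclotomic e ℤ).eval (q : ℤ) ∧ ((cyclotomic e ℤ).eval (q : ℤ)).natAbs = P ^ k := by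
  set Φ := (cyclotomic e ℤ).eval (q : ℤ)
  have hΦ1 : 1 < Φ.natAbs := (sub_one_lt_natAbs_cyclotomic_eval he (by omega)).trans_le' (by omega)
  set P := Φ.natAbs.minFac
  have hP : P.Prime := Nat.minFac_prime hΦ1.ne'
  have hPΦ : (P : ℤ) ∣ Φ := Int.natCast_dvd.2 Φ.natAbs.minFac_dvd
  have hmax : ∀ ℓ, ℓ.Prime → ℓ ∣ e → ℓ ≤ P := fun ℓ hℓ hℓe => (eq_or_ne ℓ P).elim le_of_eq
    fun hne => (lt_of_dvd_of_dvd_cyclotomic_eval hP hℓ hℓe hne hPΦ).le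
  refine ⟨P, _, hP, hdiv P hP Φ.natAbs.minFac_dvd, hmax, hPΦ,
    Nat.eq_prime_pow_of_unique_prime_dvd (by omega) fun hr hrΦ => ?_⟩
  exact le_antisymm (hmax _ hr (hdiv _ hr hrΦ)) (Nat.minFac_le_of_dvd hr.two_le hrΦ)

/-- Zsigmondy's theorem: if `q ≥ 2` and `e ≥ 2`, and we are not in one of the
exceptional cases (`q = 2, e = 6`; or `e = 2` and `q + 1` a power of two), then there
is a prime dividing `q^e - 1` that divides no `q^f - 1` with `1 ≤ f < e`. -/
theorem zsigmondy (q e : ℕ) (hq : 2 ≤ q) (he : 2 ≤ e)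
    (h1 : ¬(q = 2 ∧ e = 6)) (h2 : ¬(e = 2 ∧ ∃ k : ℕ, q + 1 = 2 ^ k)) :
    ∃ r : ℕ, r.Prime ∧ r ∣ q ^ e - 1 ∧ ∀ f : ℕ, 1 ≤ f → f < e → ¬ r ∣ q ^ f - 1 := by
  set Φ := (cyclotomic e ℤ).eval (q : ℤ)
  by_contra hnone
  have hdiv : ∀ r, r.Prime → r ∣ Φ.natAbs → r ∣ e := fun r hr hrΦ => by_contra fun hre =>
    hnone ⟨r, isZsigmondyPrime_of_dvd_cyclotomic_eval hr hre (Int.natCast_dvd.2 hrΦ)⟩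
  obtain ⟨P, k, hP, hPe, hmax, hPΦ, hk⟩ := exists_prime_pow_eq_natAbs_cyclotomic_eval hq he hdiv
  obtain rfl | he3 := he.eq_or_lt
  · have hP2 : P = 2 := (Nat.prime_dvd_prime_iff_eq hP Nat.prime_two).1 hPe
    refine h2 ⟨rfl, k, ?_⟩
    rw [← hP2, ← hk]
    simp only [cyclotomic_two, eval_add, eval_X, eval_one]
    omega
  · have hk1 : k ≤ 1 := by
      by_contra! hk2
      have hsq := Int.natCast_dvd.2 (hk ▸ pow_dvd_pow P hk2 : P ^ 2 ∣ Φ.natAbs)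
      push_cast at hsq
      exact not_sq_dvd_cyclotomic_eval hP hPe he3 hPΦ hsq
    have := prime_lt_natAbs_cyclotomic_eval hq (by omega) hP hPe hmax h1
    rw [hk] at this
    exact this.not_ge ((Nat.pow_le_pow_right hP.pos hk1).trans_eq (pow_one P))
end

section
/- Let F be a finite field with q elements, let n ≥ 1, and let r be a prime dividing q^n − 1 such that r does not divide q^j − 1 for any integer j with 1 ≤ j < n. If g is an invertible F-linear automorphism of the vector space F^n (equivalently, an element of GL(n, F)) whose order equals r, then the only F-subspaces W of F^n satisfying g(w) ∈ W for all w ∈ W are the zero subspace and F^n itself; that is, g acts irreducibly. -/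
/-!
Let `W` be a proper nonzero `g`-invariant subspace. Since `r` divides no `q ^ j - 1` with
`1 ≤ j < n`, it does not divide `|GL_d(𝔽_q)| = ∏_{i < d} (q ^ d - q ^ i)` for `0 < d < n`, so `g`
acts trivially on both `W` and `F^n / W`. Then `(g - 1) ^ 2 = 0`, hence `1 = g ^ r = 1 + r (g - 1)`,
and `r` is invertible in `F` because `r ∤ q`; so `g = 1`, contradicting `orderOf g = r`.
-/

open Module

theorem one_add_pow_of_sq_eq_zero {R : Type*} [Semiring R] {a : R} (ha : a ^ 2 = 0) (k : ℕ) :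
    (1 + a) ^ k = 1 + k * a := by
  induction k with
  | zero => simp
  | succ k ih =>
    rw [pow_succ, ih, add_mul, one_mul, mul_add, mul_one, mul_assoc, ← sq, ha, mul_zero, add_zero,
      Nat.cast_succ, add_mul, one_mul]
    abel

theorem eq_one_of_pow_eq_one_of_sq_sub_one_eq_zero {R : Type*} [Ring R] {a : R} {k : ℕ}
    (hk : IsUnit (k : R)) (ha : a ^ k = 1) (hsq : (a - 1) ^ 2 = 0) : a = 1 := by
  have hk_mul : (k : R) * (a - 1) = 0 := by
    simpa [ha] using (one_add_pow_of_sq_eq_zero hsq k).symm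
  rw [← sub_eq_zero, ← hk.mul_right_eq_zero, hk_mul]

theorem Nat.Prime.exists_dvd_pow_sub_one_of_dvd_prod {r q d : ℕ} (hr : r.Prime) (hrq : ¬ r ∣ q)
    (h : r ∣ ∏ i : Fin d, (q ^ d - q ^ (i : ℕ))) : ∃ j, 1 ≤ j ∧ j ≤ d ∧ r ∣ q ^ j - 1 := by
  obtain ⟨i, -, hi⟩ := hr.prime.exists_mem_finset_dvd h
  have hfactor : q ^ d - q ^ (i : ℕ) = q ^ (i : ℕ) * (q ^ (d - i) - 1) := by
    rw [Nat.mul_sub, mul_one, ← pow_add, Nat.add_sub_cancel' i.is_lt.le]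
  rw [hfactor] at hi
  refine ⟨d - i, by omega, by omega, ?_⟩
  exact (hr.prime.dvd_mul.mp hi).resolve_left (mt hr.dvd_of_dvd_pow hrq)

theorem Module.End.card_units_eq_card_GL (K V : Type*) [Field K] [AddCommGroup V] [Module K V]
    [FiniteDimensional K V] :
    Nat.card (Module.End K V)ˣ = Nat.card (GL (Fin (finrank K V)) K) :=
  Nat.card_congr (Units.mapEquiv (LinearMap.toMatrixAlgEquiv (finBasis K V)).toMulEquiv).toEquiv

theorem Module.End.eq_one_of_pow_prime_eq_one {F V : Type*} [Field F] [Fintype F]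
    [AddCommGroup V] [Module F V] [FiniteDimensional F V] {r : ℕ} (hr : r.Prime)
    (hrq : ¬ r ∣ Fintype.card F)
    (hzsig : ∀ j, 1 ≤ j → j ≤ finrank F V → ¬ r ∣ Fintype.card F ^ j - 1)
    {f : Module.End F V} (hf : f ^ r = 1) : f = 1 := by
  by_contra hf1
  have := Fact.mk hr
  let u := (IsUnit.of_pow_eq_one hf hr.ne_zero).unit
  have hu : orderOf u = r := orderOf_eq_prime (Units.ext hf) (mt (congrArg Units.val) hf1)
  have hdvd := hu ▸ orderOf_dvd_natCard u
  rw [Module.End.card_units_eq_card_GL, Matrix.card_GL_field] at hdvd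
  obtain ⟨j, hj1, hjd, hj⟩ := hr.exists_dvd_pow_sub_one_of_dvd_prod hrq hdvd
  exact hzsig j hj1 hjd hj

theorem Module.End.sq_sub_one_eq_zero_of_restrict_eq_one_of_mapQ_eq_one {R M : Type*} [Ring R]
    [AddCommGroup M] [Module R M] {f : Module.End R M} {W : Submodule R M}
    (hW : ∀ w ∈ W, f w ∈ W) (hres : f.restrict hW = 1) (hquot : W.mapQ W f hW = 1) :
    (f - 1) ^ 2 = 0 := by
  have hfix : ∀ w ∈ W, (f - 1) w = 0 := fun w hw => by
    simpa [sub_eq_zero] using congrArg Subtype.val (LinearMap.congr_fun hres ⟨w, hw⟩)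
  have hmem : ∀ x, (f - 1) x ∈ W := fun x => by
    simpa [Submodule.Quotient.eq] using LinearMap.congr_fun hquot (Submodule.Quotient.mk x)
  ext x
  simpa [sq] using hfix _ (hmem x)

theorem Module.End.eq_bot_or_eq_top_of_orderOf_eq_prime {F V : Type*} [Field F] [Fintype F]
    [AddCommGroup V] [Module F V] [FiniteDimensional F V] {r : ℕ} (hr : r.Prime)
    (hrq : ¬ r ∣ Fintype.card F)
    (hzsig : ∀ j, 1 ≤ j → j < finrank F V → ¬ r ∣ Fintype.card F ^ j - 1)
    {f : Module.End F V} (hf : orderOf f = r) {W : Submodule F V}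
    (hW : ∀ w ∈ W, f w ∈ W) : W = ⊥ ∨ W = ⊤ := by
  by_contra! ⟨hbot, htop⟩
  have := Fact.mk hr
  obtain ⟨hfr, hf1⟩ := orderOf_eq_prime_iff.mp hf
  have hWpos : 0 < finrank F W := Nat.pos_of_ne_zero (mt Submodule.finrank_eq_zero.mp hbot)
  have hWlt : finrank F W < finrank F V := Submodule.finrank_lt htop
  have hQlt : finrank F (V ⧸ W) < finrank F V := by
    have := W.finrank_quotient_add_finrank; omega
  have hres : f.restrict hW = 1 :=
    eq_one_of_pow_prime_eq_one hr hrq (fun j hj1 hjW => hzsig j hj1 (by omega))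
      (by ext; simp [pow_restrict, hfr])
  have hquot : W.mapQ W f hW = 1 :=
    eq_one_of_pow_prime_eq_one hr hrq (fun j hj1 hjQ => hzsig j hj1 (by omega))
      (by rw [← Submodule.mapQ_pow]; ext; simp [hfr])
  have hunit : IsUnit (r : Module.End F V) := by
    simpa using ((isUnit_iff_not_dvd_char F r).mpr
      (mt (prime_dvd_char_iff_dvd_card r).mp hrq)).map (algebraMap F (Module.End F V))
  exact hf1 (eq_one_of_pow_eq_one_of_sq_sub_one_eq_zero hunit hfr
    (sq_sub_one_eq_zero_of_restrict_eq_one_of_mapQ_eq_one hW hres hquot))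

/-- An element of order a Zsigmondy prime for `(q, n)` in `GL_n(𝔽_q)` acts irreducibly
on the natural module. -/
theorem zsigmondy_prime_order_element_acts_irreducibly
    (F : Type*) [Field F] [Fintype F] (q n r : ℕ) (hq : Fintype.card F = q)
    (hn : 1 ≤ n) (hr : r.Prime) (hdvd : r ∣ q ^ n - 1)
    (hzsig : ∀ j : ℕ, 1 ≤ j → j < n → ¬ r ∣ q ^ j - 1)
    (g : (Fin n → F) ≃ₗ[F] (Fin n → F)) (hg : orderOf g = r)
    (W : Submodule F (Fin n → F)) (hW : ∀ w ∈ W, g w ∈ W) :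
    W = ⊥ ∨ W = ⊤ := by
  subst hq
  have hrq : ¬ r ∣ Fintype.card F := fun hrq => by
    have hpow : 1 ≤ Fintype.card F ^ n := Nat.one_le_pow _ _ Fintype.card_pos
    have h1 := Nat.dvd_sub (dvd_pow hrq (Nat.one_le_iff_ne_zero.mp hn)) hdvd
    rw [Nat.sub_sub_self hpow] at h1
    exact hr.not_dvd_one h1
  have hf : orderOf (g : Module.End F (Fin n → F)) = r := by
    rw [← hg]
    exact orderOf_injective LinearEquiv.automorphismGroup.toLinearMapMonoidHom
      LinearEquiv.toLinearMap_injective g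
  exact Module.End.eq_bot_or_eq_top_of_orderOf_eq_prime hr hrq
    (by rwa [Module.finrank_fin_fun]) hf hW
end

section
/- Let F be a finite field with q elements, let n ≥ 1 and 0 ≤ k ≤ n, and let W be a k-dimensional F-subspace of F^n. Then the stabilizer P_k = { g ∈ GL(n, F) : g(w) ∈ W for all w ∈ W } of W in GL(n, F) has cardinality q^(n(n−1)/2) · (∏_{j=1}^{k} (q^j − 1)) · (∏_{j=1}^{n−k} (q^j − 1)). -/
/-!
A linear automorphism of `F^n` carries `W` onto the span of the first `k` coordinate vectors, and
conjugation by it identifies the two stabilizers. The stabilizer of the coordinate subspace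
consists of the invertible block upper-triangular matrices `[[A, B], [0, D]]`; since their
determinant is `det A * det D`, these correspond to arbitrary triples `A ∈ GL_k`, `D ∈ GL_{n-k}`,
`B ∈ F^{k × (n-k)}`. Hence the order is `|GL_k| |GL_{n-k}| q^{k(n-k)}`, and the formula follows from
`|GL_d| = q^(d choose 2) ∏_{j=1}^d (q^j - 1)` together with
`(k + m choose 2) = (k choose 2) + (m choose 2) + k m`.
-/

open Matrix Module

theorem Nat.add_choose_two (a b : ℕ) :
    (a + b).choose 2 = a.choose 2 + b.choose 2 + a * b := by
  induction b with
  | zero => simp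
  | succ b ih => simp only [← add_assoc, Nat.choose_succ_succ', ih, Nat.choose_one_right]; ring

theorem Matrix.card_GL_field_eq_pow_mul_prod (F : Type*) [Field F] [Fintype F] (d : ℕ) :
    Nat.card (GL (Fin d) F) =
      Fintype.card F ^ d.choose 2 * ∏ j ∈ Finset.Icc 1 d, (Fintype.card F ^ j - 1) := by
  set q := Fintype.card F
  -- the exponent `d - 1 - i + 1` is the shape `Finset.prod_range_reflect` produces
  have hfactor : ∀ i ∈ Finset.range d, q ^ d - q ^ i = q ^ i * (q ^ (d - 1 - i + 1) - 1) := by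
    intro i hi
    rw [Nat.mul_sub, mul_one, ← pow_add]
    congr 2
    have := Finset.mem_range.1 hi
    omega
  rw [card_GL_field, Fin.prod_univ_eq_prod_range (fun i => q ^ d - q ^ i),
    Finset.prod_congr rfl hfactor, Finset.prod_mul_distrib, Finset.prod_pow_eq_pow_sum,
    Finset.sum_range_id, ← Nat.choose_two_right,
    Finset.prod_range_reflect (fun j => q ^ (j + 1) - 1), Finset.range_eq_Ico,
    Finset.prod_Ico_add' (fun j => q ^ j - 1), ← Finset.Ico_add_one_right_eq_Icc]

theorem Submodule.exists_linearEquiv_map_eq {K V V' : Type*} [DivisionRing K]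
    [AddCommGroup V] [Module K V] [FiniteDimensional K V]
    [AddCommGroup V'] [Module K V'] [FiniteDimensional K V']
    (p : Submodule K V) (p' : Submodule K V')
    (hV : finrank K V = finrank K V') (hp : finrank K p = finrank K p') :
    ∃ e : V ≃ₗ[K] V', p.map (e : V →ₗ[K] V') = p' := by
  obtain ⟨c, hc⟩ := p.exists_isCompl
  obtain ⟨c', hc'⟩ := p'.exists_isCompl
  have hrank_c : finrank K c = finrank K c' := by
    have := Submodule.finrank_add_eq_of_isCompl hc
    have := Submodule.finrank_add_eq_of_isCompl hc'
    omega
  let eP := LinearEquiv.ofFinrankEq p p' hp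
  let e := (p.prodEquivOfIsCompl c hc).symm ≪≫ₗ
    (eP.prodCongr (LinearEquiv.ofFinrankEq c c' hrank_c)) ≪≫ₗ p'.prodEquivOfIsCompl c' hc'
  have he : ∀ x : p, e x = eP x := fun x => by simp [e]
  refine ⟨e, le_antisymm ?_ fun y hy => ?_⟩
  · rintro _ ⟨x, hx, rfl⟩
    exact (he ⟨x, hx⟩).symm ▸ (eP ⟨x, hx⟩).2
  · refine ⟨eP.symm ⟨y, hy⟩, (eP.symm ⟨y, hy⟩).2, ?_⟩
    simp [he]

theorem Matrix.card_stabilizer_map_linearEquiv {R m n : Type*} [CommRing R]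
    [Fintype m] [DecidableEq m] [Fintype n] [DecidableEq n]
    (e : (m → R) ≃ₗ[R] (n → R)) (W : Submodule R (m → R)) :
    Nat.card {g : GL n R // ∀ w ∈ W.map (e : (m → R) →ₗ[R] n → R),
        (g : Matrix n n R) *ᵥ w ∈ W.map (e : (m → R) →ₗ[R] n → R)} =
      Nat.card {g : GL m R // ∀ w ∈ W, (g : Matrix m m R) *ᵥ w ∈ W} := by
  let φ : GL m R ≃* GL n R := GeneralLinearGroup.toLin.trans
    ((LinearMap.GeneralLinearGroup.congrLinearEquiv e).trans GeneralLinearGroup.toLin.symm)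
  have hφ : ∀ g w, (φ g : Matrix n n R) *ᵥ w = e ((g : Matrix m m R) *ᵥ e.symm w) := by
    intro g w
    change LinearMap.toMatrix' _ *ᵥ _ = _
    rw [← Matrix.toLin'_apply, Matrix.toLin'_toMatrix']
    rfl
  refine (Nat.card_congr (φ.toEquiv.subtypeEquiv fun g => ?_)).symm
  simp only [Submodule.mem_map_equiv, MulEquiv.toEquiv_eq_coe, EquivLike.coe_coe, hφ,
    LinearEquiv.symm_apply_apply]
  exact e.symm.surjective.forall

def sumInlSubspace (R ι κ : Type*) [CommRing R] : Submodule R (ι ⊕ κ → R) :=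
  LinearMap.ker (LinearMap.funLeft R R Sum.inr)

theorem mem_sumInlSubspace {R ι κ : Type*} [CommRing R] {v : ι ⊕ κ → R} :
    v ∈ sumInlSubspace R ι κ ↔ ∀ j, v (Sum.inr j) = 0 := by
  simp [sumInlSubspace, funext_iff]

theorem finrank_sumInlSubspace (K ι κ : Type*) [Field K] [Fintype ι] [Fintype κ] :
    finrank K (sumInlSubspace K ι κ) = Fintype.card ι := by
  have := (LinearMap.funLeft K K (Sum.inr : κ → ι ⊕ κ)).finrank_range_add_finrank_ker
  rw [LinearMap.range_eq_top.2 (LinearMap.funLeft_surjective_of_injective _ _ _ Sum.inr_injective),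
    finrank_top, finrank_fintype_fun_eq_card, finrank_fintype_fun_eq_card,
    Fintype.card_sum] at this
  rw [sumInlSubspace]
  omega

section BlockTriangular

variable {R ι κ : Type*} [CommRing R] [Fintype ι] [Fintype κ] [DecidableEq ι] [DecidableEq κ]

theorem Matrix.mulVec_mem_sumInlSubspace_iff (M : Matrix (ι ⊕ κ) (ι ⊕ κ) R) :
    (∀ w ∈ sumInlSubspace R ι κ, M *ᵥ w ∈ sumInlSubspace R ι κ) ↔ M.toBlocks₂₁ = 0 := by
  simp only [mem_sumInlSubspace]
  refine ⟨fun h => ?_, fun h w hw i => ?_⟩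
  · ext i j
    simpa [toBlocks₂₁] using h (Pi.single (Sum.inl j) 1) (by simp) i
  · have h' (j : ι) : M (Sum.inr i) (Sum.inl j) = 0 := congrFun (congrFun h i) j
    simp [mulVec, dotProduct, Fintype.sum_sum_type, hw, h']

theorem Matrix.card_GL_sum_toBlocks₂₁_eq_zero [Finite R] :
    Nat.card {g : GL (ι ⊕ κ) R // (g : Matrix (ι ⊕ κ) (ι ⊕ κ) R).toBlocks₂₁ = 0} =
      Nat.card (GL ι R) * Nat.card (GL κ R) * Nat.card R ^ (Fintype.card ι * Fintype.card κ) := by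
  let f : GL ι R × GL κ R × Matrix ι κ R →
      {g : GL (ι ⊕ κ) R // (g : Matrix (ι ⊕ κ) (ι ⊕ κ) R).toBlocks₂₁ = 0} := fun ⟨A, D, B⟩ =>
    ⟨GeneralLinearGroup.mk'' (fromBlocks A B 0 D) (by
      rw [det_fromBlocks_zero₂₁]; exact (isUnits_det_units A).mul (isUnits_det_units D)),
      toBlocks_fromBlocks₂₁ _ _ _ _⟩
  have hf : f.Bijective := by
    refine ⟨fun ⟨A, D, B⟩ ⟨A', D', B'⟩ h => ?_, fun ⟨g, hg⟩ => ?_⟩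
    · obtain ⟨hA, hB, -, hD⟩ := fromBlocks_inj.1 (congrArg (fun g => g.1.1) h)
      simp only [Prod.mk.injEq]
      exact ⟨Units.ext hA, Units.ext hD, hB⟩
    · have hblocks := fromBlocks_toBlocks (g : Matrix (ι ⊕ κ) (ι ⊕ κ) R)
      rw [hg] at hblocks
      have hdet : IsUnit (g.1.toBlocks₁₁.det * g.1.toBlocks₂₂.det) := by
        rw [← det_fromBlocks_zero₂₁, hblocks]
        exact isUnits_det_units g
      obtain ⟨hA, hD⟩ := IsUnit.mul_iff.1 hdet
      exact ⟨(GeneralLinearGroup.mk'' _ hA, GeneralLinearGroup.mk'' _ hD, _),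
        Subtype.ext (Units.ext hblocks)⟩
  rw [← Nat.card_eq_of_bijective f hf, Nat.card_prod, Nat.card_prod, mul_assoc]
  simp [Matrix, Nat.card_fun, ← pow_mul, mul_comm]

end BlockTriangular

theorem card_parabolic_subgroup_general
    (F : Type*) [Field F] [Fintype F] (q n k : ℕ) (hq : Fintype.card F = q)
    (hk : k ≤ n)
    (W : Submodule F (Fin n → F)) (hW : Module.finrank F W = k) :
    Nat.card {g : Matrix.GeneralLinearGroup (Fin n) F //
        ∀ w ∈ W, (g : Matrix (Fin n) (Fin n) F).mulVec w ∈ W} =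
      q ^ (n * (n - 1) / 2) * (∏ j ∈ Finset.Icc 1 k, (q ^ j - 1)) *
        (∏ j ∈ Finset.Icc 1 (n - k), (q ^ j - 1)) := by
  obtain ⟨m, rfl⟩ := Nat.exists_eq_add_of_le hk
  obtain ⟨e, he⟩ := W.exists_linearEquiv_map_eq (sumInlSubspace F (Fin k) (Fin m))
    (by simp) (by rw [hW, finrank_sumInlSubspace, Fintype.card_fin])
  rw [← card_stabilizer_map_linearEquiv e, he]
  simp only [mulVec_mem_sumInlSubspace_iff, card_GL_sum_toBlocks₂₁_eq_zero,
    card_GL_field_eq_pow_mul_prod, Fintype.card_fin, Nat.card_eq_fintype_card, hq,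
    Nat.add_sub_cancel_left, ← Nat.choose_two_right, Nat.add_choose_two]
  ring

/-- The order of the stabilizer in `GL_n(𝔽_q)` of a `k`-dimensional subspace of `𝔽_q^n`
is `q^(n(n-1)/2) · ∏_{j=1}^k (q^j - 1) · ∏_{j=1}^{n-k} (q^j - 1)`. -/
theorem card_parabolic_subgroup
    (F : Type*) [Field F] [Fintype F] (q n k : ℕ) (hq : Fintype.card F = q)
    (hn : 1 ≤ n) (hk : k ≤ n)
    (W : Submodule F (Fin n → F)) (hW : Module.finrank F W = k) :
    Nat.card {g : Matrix.GeneralLinearGroup (Fin n) F //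
        ∀ w ∈ W, (g : Matrix (Fin n) (Fin n) F).mulVec w ∈ W} =
      q ^ (n * (n - 1) / 2) * (∏ j ∈ Finset.Icc 1 k, (q ^ j - 1)) *
        (∏ j ∈ Finset.Icc 1 (n - k), (q ^ j - 1)) :=
  card_parabolic_subgroup_general F q n k hq hk W hW
end

section
/- Let G be a finite group and let N be an abelian minimal normal subgroup of G. Let H and K be proper subgroups of G with HN = G and KN = G, and let x, y ∈ G. If the right coset Hx is contained in the right coset Ky (as subsets of G), then Hx = Ky. In other words, the cosets of proper subgroups H with HN = G form an antichain under inclusion. -/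
open scoped Pointwise

/-!
Since `Hx ⊆ Ky` forces `H ≤ K`, it suffices to show `H = K`. As `G = KN` and `N` is abelian,
`K ∩ N` is normalized by both `K` and `N`, hence normal in `G`; by minimality it is trivial,
since `N ≤ K` would give `K = G`. Dedekind's modular law then yields
`K = K ∩ HN = H (K ∩ N) = H`.
-/

namespace Subgroup

variable {G : Type*} [Group G]

theorem mem_mul_singleton_iff {H : Subgroup G} {g x : G} :
    g ∈ (H : Set G) * {x} ↔ g * x⁻¹ ∈ H := by
  simp [Set.mul_singleton]

theorem mul_inv_mem_of_mul_singleton_subset {H K : Subgroup G} {x y : G}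
    (h : (H : Set G) * {x} ⊆ (K : Set G) * {y}) : x * y⁻¹ ∈ K :=
  mem_mul_singleton_iff.1 (h (mem_mul_singleton_iff.2 (by simp)))

theorem le_of_mul_singleton_subset {H K : Subgroup G} {x y : G}
    (h : (H : Set G) * {x} ⊆ (K : Set G) * {y}) : H ≤ K := by
  intro g hg
  have hgx : g * x * y⁻¹ ∈ K := mem_mul_singleton_iff.1 (h (mem_mul_singleton_iff.2 (by simpa)))
  simpa [mul_assoc] using K.mul_mem hgx (K.inv_mem (mul_inv_mem_of_mul_singleton_subset h))

theorem mul_singleton_eq_of_subset {H : Subgroup G} {x y : G}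
    (h : (H : Set G) * {x} ⊆ (H : Set G) * {y}) : (H : Set G) * {x} = (H : Set G) * {y} := by
  ext g
  rw [mem_mul_singleton_iff, mem_mul_singleton_iff,
    ← mul_mem_cancel_right (mul_inv_mem_of_mul_singleton_subset h), mul_assoc, inv_mul_cancel_left]

theorem normal_inf_of_sup_eq_top {K N : Subgroup G} [N.Normal]
    (hab : ∀ a ∈ N, ∀ b ∈ N, a * b = b * a) (hKN : K ⊔ N = ⊤) : (K ⊓ N).Normal := by
  rw [← normalizer_eq_top_iff, eq_top_iff, ← hKN, sup_le_iff]
  constructor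
  · calc K ≤ normalizer (K : Set G) ⊓ normalizer (N : Set G) := by
          simp [le_normalizer, normalizer_eq_top]
      _ ≤ _ := inf_normalizer_le_normalizer_inf
  · refine le_trans (fun n hn => mem_centralizer_iff.2 fun a ha => ?_) (centralizer_le_normalizer _)
    exact hab a (mem_inf.1 ha).2 n hn

theorem inf_eq_bot_of_minimal {K N : Subgroup G} [N.Normal]
    (hmin : ∀ M : Subgroup G, M.Normal → M ≤ N → M = ⊥ ∨ M = N)
    (hab : ∀ a ∈ N, ∀ b ∈ N, a * b = b * a) (hK : K ≠ ⊤) (hKN : K ⊔ N = ⊤) :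
    K ⊓ N = ⊥ := by
  refine (hmin _ (normal_inf_of_sup_eq_top hab hKN) inf_le_right).resolve_right fun h => hK ?_
  rwa [sup_eq_left.2 (inf_eq_right.1 h)] at hKN

theorem eq_of_le_of_sup_eq_top_of_inf_eq_bot {H K N : Subgroup G} [N.Normal] (hHK : H ≤ K)
    (hHN : H ⊔ N = ⊤) (hKN : K ⊓ N = ⊥) : H = K := by
  have modular := mul_inf_assoc H N K hHK
  rw [inf_comm, hKN, ← mul_normal H N, hHN, coe_bot, Set.singleton_one, mul_one, coe_top, Set.univ_inter] at modular
  exact SetLike.coe_injective modular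

end Subgroup

theorem abelian_minimal_normal_cosets_antichain_general
    (G : Type*) [Group G] (N : Subgroup G) [N.Normal]
    (hmin : ∀ M : Subgroup G, M.Normal → M ≤ N → M = ⊥ ∨ M = N)
    (hab : ∀ a ∈ N, ∀ b ∈ N, a * b = b * a)
    (H K : Subgroup G) (hK : K ≠ ⊤)
    (hHN : H ⊔ N = ⊤) (hKN : K ⊔ N = ⊤) (x y : G)
    (hsub : (H : Set G) * {x} ⊆ (K : Set G) * {y}) :
    (H : Set G) * {x} = (K : Set G) * {y} := by
  have hKN_bot : K ⊓ N = ⊥ := Subgroup.inf_eq_bot_of_minimal hmin hab hK hKN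
  obtain rfl : H = K := Subgroup.eq_of_le_of_sup_eq_top_of_inf_eq_bot
    (Subgroup.le_of_mul_singleton_subset hsub) hHN hKN_bot
  exact Subgroup.mul_singleton_eq_of_subset hsub

/-- If `N` is an abelian minimal normal subgroup of a finite group `G`, the cosets of
proper subgroups `H` with `HN = G` form an antichain under inclusion. -/
theorem abelian_minimal_normal_cosets_antichain
    (G : Type*) [Group G] [Finite G] (N : Subgroup G) [N.Normal]
    (hbot : N ≠ ⊥)
    (hmin : ∀ M : Subgroup G, M.Normal → M ≤ N → M = ⊥ ∨ M = N)
    (hab : ∀ a ∈ N, ∀ b ∈ N, a * b = b * a)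
    (H K : Subgroup G) (hH : H ≠ ⊤) (hK : K ≠ ⊤)
    (hHN : H ⊔ N = ⊤) (hKN : K ⊔ N = ⊤) (x y : G)
    (hsub : (H : Set G) * {x} ⊆ (K : Set G) * {y}) :
    (H : Set G) * {x} = (K : Set G) * {y} :=
  abelian_minimal_normal_cosets_antichain_general G N hmin hab H K hK hHN hKN x y hsub
end

section
/- Let G be a finite group and let N be an abelian minimal normal subgroup of G. Then the number of subsets of G of the form Hx, where H ranges over proper subgroups of G with HN = G and x ranges over G, is divisible by the cardinality of N. -/
/-!
`N` acts on these cosets by right multiplication, and the action is free: for a proper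
supplement `H` of `N`, the intersection `H ⊓ N` is normalized by `H` (as `N` is normal) and by
`N` (as `N` is abelian), hence is normal in `H ⊔ N = G`; by minimality, and since `H ≠ G`, it is
trivial. The stabilizer of `Hx` in `N` is `x⁻¹Hx ⊓ N = x⁻¹(H ⊓ N)x`, so every orbit has `|N|`
elements.
-/

open scoped Pointwise

theorem MulAction.card_dvd_card_of_stabilizer_eq_bot {K α : Type*} [Group K] [MulAction K α]
    (h : ∀ a : α, stabilizer K a = ⊥) : Nat.card K ∣ Nat.card α := by
  rw [Nat.card_congr (selfEquivOrbitsQuotientProd h), Nat.card_prod]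
  exact dvd_mul_left _ _

namespace Subgroup

variable {G : Type*} [Group G] {H N : Subgroup G}

theorem normal_inf_of_sup_eq_top_s16 [N.Normal] (hN : N ≤ centralizer N) (hHN : H ⊔ N = ⊤) :
    (H ⊓ N).Normal := by
  rw [← normalizer_eq_top_iff, eq_top_iff, ← hHN, sup_le_iff]
  constructor
  · calc H ≤ normalizer H ⊓ normalizer N := le_inf le_normalizer (by simp [normalizer_eq_top])
      _ ≤ _ := inf_normalizer_le_normalizer_inf
  · calc N ≤ centralizer N := hN
      _ ≤ centralizer (H ⊓ N : Subgroup G) := centralizer_le inf_le_right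
      _ ≤ _ := centralizer_le_normalizer _

theorem inf_eq_bot_of_minimal_normal [N.Normal]
    (hmin : ∀ M : Subgroup G, M.Normal → M ≤ N → M = ⊥ ∨ M = N) (hN : N ≤ centralizer N)
    (hH : H ≠ ⊤) (hHN : H ⊔ N = ⊤) : H ⊓ N = ⊥ :=
  (hmin _ (normal_inf_of_sup_eq_top_s16 hN hHN) inf_le_right).resolve_right fun h ↦
    hH (by rwa [sup_of_le_left (inf_eq_right.mp h)] at hHN)

end Subgroup

section

variable {G : Type*} [Group G]

open MulOpposite Subgroup

theorem Set.mul_singleton_eq_op_smul (s : Set G) (a : G) : s * {a} = op a • s :=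
  Set.image2_singleton_right

def rightCosetsOfProperSupplements (N : Subgroup G) : SubMulAction Gᵐᵒᵖ (Set G) where
  carrier := {S | ∃ (H : Subgroup G) (x : G), H ≠ ⊤ ∧ H ⊔ N = ⊤ ∧ S = (H : Set G) * {x}}
  smul_mem' g := by
    rintro _ ⟨H, x, hH, hHN, rfl⟩
    refine ⟨H, x * g.unop, hH, hHN, ?_⟩
    rw [Set.mul_singleton_eq_op_smul, Set.mul_singleton_eq_op_smul, smul_smul]
    rfl

theorem stabilizer_rightCosetsOfProperSupplements_eq_bot {N : Subgroup G} [N.Normal]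
    (hmin : ∀ M : Subgroup G, M.Normal → M ≤ N → M = ⊥ ∨ M = N) (hN : N ≤ centralizer N)
    (S : rightCosetsOfProperSupplements N) : MulAction.stabilizer N.op S = ⊥ := by
  obtain ⟨_, H, x, hH, hHN, rfl⟩ := S
  rw [eq_bot_iff_forall]
  rintro ⟨n, hn⟩ hfix
  have hcoset : (op (x * n.unop) • H : Set G) = op x • H := by
    have : n • ((H : Set G) * {x}) = H * {x} := congrArg Subtype.val hfix
    rwa [Set.mul_singleton_eq_op_smul, smul_smul] at this
  have hconj : x * n.unop⁻¹ * x⁻¹ ∈ H ⊓ N := by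
    refine ⟨?_, Normal.conj_mem ‹_› _ (N.inv_mem (mem_op.mp hn)) x⟩
    simpa [mul_assoc] using (rightCoset_eq_iff (s := H)).mp hcoset
  rw [inf_eq_bot_of_minimal_normal hmin hN hH hHN, mem_bot, conj_eq_one_iff, inv_eq_one] at hconj
  exact Subtype.ext (congrArg op hconj)

end

theorem abelian_minimal_normal_card_cosets_dvd_general
    (G : Type*) [Group G] (N : Subgroup G) [N.Normal]
    (hmin : ∀ M : Subgroup G, M.Normal → M ≤ N → M = ⊥ ∨ M = N)
    (hab : ∀ a ∈ N, ∀ b ∈ N, a * b = b * a) :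
    Nat.card N ∣
      Nat.card {S : Set G | ∃ (H : Subgroup G) (x : G),
        H ≠ ⊤ ∧ H ⊔ N = ⊤ ∧ S = (H : Set G) * {x}} := by
  have hN : N ≤ Subgroup.centralizer N := fun b hb a ha ↦ hab a ha b hb
  rw [Nat.card_congr N.equivOp]
  exact (MulAction.card_dvd_card_of_stabilizer_eq_bot
    (stabilizer_rightCosetsOfProperSupplements_eq_bot hmin hN) :
      Nat.card N.op ∣ Nat.card (rightCosetsOfProperSupplements N))

/-- If `N` is an abelian minimal normal subgroup of a finite group `G`, then the number
of cosets `Hx` of proper subgroups `H` of `G` with `HN = G` is divisible by `|N|`. -/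
theorem abelian_minimal_normal_card_cosets_dvd
    (G : Type*) [Group G] [Finite G] (N : Subgroup G) [N.Normal]
    (hbot : N ≠ ⊥)
    (hmin : ∀ M : Subgroup G, M.Normal → M ≤ N → M = ⊥ ∨ M = N)
    (hab : ∀ a ∈ N, ∀ b ∈ N, a * b = b * a) :
    Nat.card N ∣
      Nat.card {S : Set G | ∃ (H : Subgroup G) (x : G),
        H ≠ ⊤ ∧ H ⊔ N = ⊤ ∧ S = (H : Set G) * {x}} :=
  abelian_minimal_normal_card_cosets_dvd_general G N hmin hab
end

section
/- Let G be a group, let N be a normal subgroup of G, and let C, P be subgroups of G contained in N such that for every g ∈ G the subgroup generated by C ∪ g⁻¹Pg equals N. Then for every proper subgroup H of G with HN = G and every x ∈ G, there exist c ∈ C and k ∈ P such that the set {c⁻¹hxk : h ∈ H} is not equal to the right coset Hx = {hx : h ∈ H}; that is, no coset of such a subgroup H is fixed by the action of C × P. -/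
/-! If `C × P` fixed the coset `Hx`, then taking `k = 1` and `c = 1` shows that `H` contains
`C` and `xPx⁻¹`, hence `⟨C, xPx⁻¹⟩`, which is `N` by the generation hypothesis at `g = x⁻¹`;
together with `HN = G` this forces `H = G`. -/

namespace Subgroup

variable {G : Type*} [Group G]

theorem mul_conj_mem_of_setOf_eq {H : Subgroup G} {x c k : G}
    (hfix : {y : G | ∃ h ∈ H, y = c⁻¹ * h * x * k} = {y : G | ∃ h ∈ H, y = h * x}) :
    c⁻¹ * (x * k * x⁻¹) ∈ H := by
  have hmem : c⁻¹ * x * k ∈ {y : G | ∃ h ∈ H, y = h * x} := hfix ▸ ⟨1, H.one_mem, by group⟩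
  obtain ⟨h, hh, hxk⟩ := hmem
  have : c⁻¹ * (x * k * x⁻¹) = h := by rw [← mul_inv_eq_of_eq_mul hxk]; group
  exact this ▸ hh

theorem closure_union_conj_le {H C P : Subgroup G} {g : G} (hCH : C ≤ H)
    (hPH : ∀ a ∈ P, g⁻¹ * a * g ∈ H) :
    closure ((C : Set G) ∪ {y : G | ∃ a ∈ P, y = g⁻¹ * a * g}) ≤ H := by
  rw [closure_le]
  rintro y (hy | ⟨a, ha, rfl⟩)
  · exact hCH hy
  · exact hPH a ha

end Subgroup

open Subgroup in
theorem no_fixed_coset_general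
    (G : Type*) [Group G] (N : Subgroup G) (C P : Subgroup G)
    (hgen : ∀ g : G,
      Subgroup.closure ((C : Set G) ∪ {x : G | ∃ a ∈ P, x = g⁻¹ * a * g}) = N)
    (H : Subgroup G) (hH : H ≠ ⊤) (hHN : H ⊔ N = ⊤) (x : G) :
    ∃ c ∈ C, ∃ k ∈ P,
      {y : G | ∃ h ∈ H, y = c⁻¹ * h * x * k} ≠ {y : G | ∃ h ∈ H, y = h * x} := by
  by_contra! hfix
  have hCH : C ≤ H := fun c hc => by
    simpa using H.inv_mem (mul_conj_mem_of_setOf_eq (hfix c hc 1 P.one_mem))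
  have hPH : ∀ a ∈ P, x⁻¹⁻¹ * a * x⁻¹ ∈ H := fun a ha => by
    simpa using mul_conj_mem_of_setOf_eq (hfix 1 C.one_mem a ha)
  have hNH : N ≤ H := hgen x⁻¹ ▸ closure_union_conj_le hCH hPH
  exact hH (by rw [← hHN, sup_eq_left.mpr hNH])

/-- If `C, P ≤ N ⊴ G` satisfy `⟨C, P^g⟩ = N` for all `g ∈ G`, then no coset of a
proper subgroup `H` of `G` with `HN = G` is fixed by the action of `C × P`. -/
theorem no_fixed_coset
    (G : Type*) [Group G] (N : Subgroup G) [N.Normal] (C P : Subgroup G)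
    (hC : C ≤ N) (hP : P ≤ N)
    (hgen : ∀ g : G,
      Subgroup.closure ((C : Set G) ∪ {x : G | ∃ a ∈ P, x = g⁻¹ * a * g}) = N)
    (H : Subgroup G) (hH : H ≠ ⊤) (hHN : H ⊔ N = ⊤) (x : G) :
    ∃ c ∈ C, ∃ k ∈ P,
      {y : G | ∃ h ∈ H, y = c⁻¹ * h * x * k} ≠ {y : G | ∃ h ∈ H, y = h * x} :=
  no_fixed_coset_general G N C P hgen H hH hHN x
end

section
/- Let p be a prime, let G be a finite p-group acting on a finite vertex set V, and let Δ be a finite abstract simplicial complex on V (a finite set of nonempty finite subsets of V closed under passing to nonempty subsets) such that g • σ ∈ Δ for every g ∈ G and σ ∈ Δ. Let Δ^G be the set of faces σ ∈ Δ with g • σ = σ for all g ∈ G. Then the reduced Euler characteristics satisfy χ̃(Δ) ≡ χ̃(Δ^G) (mod p), where χ̃(Δ) = −1 + Σ_{σ ∈ Δ} (−1)^(|σ|−1). -/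
/-!
The faces of `Δ` not fixed by `G` fall into orbits whose sizes are nontrivial powers of `p`, and
the sign `(-1) ^ (|σ| - 1)` is constant along each orbit, so these faces contribute `0` modulo `p`.
Grouping faces by sign reduces this to the count `#t ≡ #t^G [MOD p]` for `G`-stable sets `t`.
-/

open scoped Pointwise

open Finset MulAction

namespace IsPGroup

variable {p : ℕ} [Fact p.Prime] {G α : Type*} [Group G] [Fintype G] [MulAction G α]
  [DecidableEq α]

theorem card_finset_modEq_card_filter_fixed (hG : IsPGroup p G) {t : Finset α}
    (ht : ∀ g : G, ∀ x ∈ t, g • x ∈ t) :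
    #t ≡ #{x ∈ t | ∀ g : G, g • x = x} [MOD p] := by
  let T : SubMulAction G α := { carrier := t, smul_mem' := ht }
  have : Finite T := t.finite_toSet
  have hT : Nat.card T = #t := Nat.card_eq_finsetCard t
  have hfixed : Nat.card (fixedPoints G T) = #{x ∈ t | ∀ g : G, g • x = x} := by
    rw [← Nat.card_eq_finsetCard]
    exact Nat.card_congr
      { toFun := fun x => ⟨x.1.1, mem_filter.2 ⟨x.1.2, fun g => congrArg Subtype.val (x.2 g)⟩⟩
        invFun := fun y =>
          ⟨⟨y.1, (mem_filter.1 y.2).1⟩, fun g => Subtype.ext ((mem_filter.1 y.2).2 g)⟩ }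
  simpa only [hT, hfixed] using hG.card_modEq_card_fixedPoints T

theorem sum_modEq_sum_filter_fixed (hG : IsPGroup p G) {s : Finset α}
    (hs : ∀ g : G, ∀ x ∈ s, g • x ∈ s) (f : α → ℤ) (hf : ∀ g : G, ∀ x ∈ s, f (g • x) = f x) :
    ∑ x ∈ s, f x ≡ ∑ x ∈ s with ∀ g : G, g • x = x, f x [ZMOD p] := by
  have hmaps : ∀ x ∈ s, f x ∈ s.image f := fun x hx => mem_image_of_mem f hx
  rw [← sum_fiberwise_of_maps_to hmaps,
    ← sum_fiberwise_of_maps_to fun x hx => hmaps x (mem_filter.1 hx).1]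
  refine Int.ModEq.sum fun y _ => ?_
  have hfiber : ∀ t : Finset α, ∑ x ∈ t with f x = y, f x = #{x ∈ t | f x = y} * y := fun t => by
    rw [sum_congr rfl fun x hx => (mem_filter.1 hx).2, sum_const, nsmul_eq_mul]
  rw [hfiber, hfiber, filter_comm]
  refine Int.ModEq.mul_right y <|
    Int.natCast_modEq_iff.2 <| card_finset_modEq_card_filter_fixed hG ?_
  intro g x hx
  obtain ⟨hxs, rfl⟩ := mem_filter.1 hx
  exact mem_filter.2 ⟨hs g x hxs, hf g x hxs⟩

end IsPGroup

theorem reduced_euler_char_fixed_subcomplex_modEq_general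
    (p : ℕ) (hp : p.Prime) (G V : Type*) [Group G] [Fintype G]
    [DecidableEq V] [MulAction G V]
    (hpgroup : ∃ n : ℕ, Fintype.card G = p ^ n)
    (Δ : Finset (Finset V))
    (hact : ∀ g : G, ∀ σ ∈ Δ, g • σ ∈ Δ) :
    (-1 + ∑ σ ∈ Δ, (-1 : ℤ) ^ (σ.card - 1)) ≡
      (-1 + ∑ σ ∈ Δ.filter (fun σ => ∀ g : G, g • σ = σ), (-1 : ℤ) ^ (σ.card - 1))
        [ZMOD (p : ℤ)] := by
  have : Fact p.Prime := ⟨hp⟩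
  obtain ⟨n, hcard⟩ := hpgroup
  have hG : IsPGroup p G := IsPGroup.of_card (n := n) (by rwa [Nat.card_eq_fintype_card])
  refine Int.ModEq.add_left _ (hG.sum_modEq_sum_filter_fixed hact _ fun g σ _ => ?_)
  rw [card_smul_finset]

/-- Smith theory, claim (3): if a finite `p`-group `G` acts on a finite simplicial
complex `Δ`, then `χ̃(Δ) ≡ χ̃(Δ^G) (mod p)`. -/
theorem reduced_euler_char_fixed_subcomplex_modEq
    (p : ℕ) (hp : p.Prime) (G V : Type*) [Group G] [Fintype G] [Fintype V]
    [DecidableEq V] [MulAction G V]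
    (hpgroup : ∃ n : ℕ, Fintype.card G = p ^ n)
    (Δ : Finset (Finset V))
    (hne : ∀ σ ∈ Δ, σ.Nonempty)
    (hdown : ∀ σ ∈ Δ, ∀ τ : Finset V, τ ⊆ σ → τ.Nonempty → τ ∈ Δ)
    (hact : ∀ g : G, ∀ σ ∈ Δ, g • σ ∈ Δ) :
    (-1 + ∑ σ ∈ Δ, (-1 : ℤ) ^ (σ.card - 1)) ≡
      (-1 + ∑ σ ∈ Δ.filter (fun σ => ∀ g : G, g • σ = σ), (-1 : ℤ) ^ (σ.card - 1))
        [ZMOD (p : ℤ)] :=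
  reduced_euler_char_fixed_subcomplex_modEq_general p hp G V hpgroup Δ hact
end
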